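/- arXiv:2207.11747 — 4 statements merged into one kernel-verified Lean document; each statement's English description precedes it below -/
import Mathlib

section
/- Let K ⊆ R^d be a polyhedral cone that is self-dual with respect to an inner product ⟨·,·⟩, and suppose K = K₁ + K₂ where K₁, K₂ are nonzero closed convex cones with span(K₁) ∩ span(K₂) = {0}. Then K₁ = K ∩ K₂^⊥, and in particular K₁ and K₂ are orthogonal with respect to ⟨·,·⟩. -/
open Matrix Pointwise

/-- A polyhedral cone: the cone of nonnegative combinations of finitely many vectors. -/
def IsPolyhedralCone {d : ℕ} (K : Set (Fin d → ℝ)) : Prop :=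
  ∃ (n : ℕ) (v : Fin n → (Fin d → ℝ)),
    K = {x | ∃ c : Fin n → ℝ, (∀ i, 0 ≤ c i) ∧ x = ∑ i, c i • v i}

/-! Self-duality forces `K ∩ K₂^⊥ ⊆ K₁`: if `x = x₁ + x₂` is orthogonal to `x₂`, then
`⟨x₂, x₂⟩ = -⟨x₁, x₂⟩ ≤ 0` because `x₁, x₂ ∈ K = K*`. Since `span K₁ ∩ span K₂ = 0`, the orthogonal
complements of `span K₂` and `span K₁` together span the space, so every `x ∈ K` is `u + v` with
`u ⊥ K₂` and `v ⊥ K₁`. Against `k₁ + k₂ ∈ K` the vector `u` pairs exactly as `x` pairs with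
`k₁ ∈ K`, so `u ∈ K* = K`, and likewise `v ∈ K`. Thus `u ∈ K ∩ K₂^⊥ ⊆ K₁` and
`v ∈ K ∩ K₁^⊥ ⊆ K₂`; for `x ∈ K₁`, uniqueness of the decomposition along `span K₁ ⊕ span K₂`
forces `v = 0`, i.e. `x = u ∈ K ∩ K₂^⊥`. -/

open LinearMap (BilinForm)

namespace LinearMap.BilinForm

theorem orthogonal_sup {R M : Type*} [CommRing R] [AddCommGroup M] [Module R M]
    {B : BilinForm R M} (N L : Submodule R M) :
    B.orthogonal (N ⊔ L) = B.orthogonal N ⊓ B.orthogonal L := by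
  refine le_antisymm (le_inf (orthogonal_le le_sup_left) (orthogonal_le le_sup_right)) ?_
  rintro x ⟨hN, hL⟩ z hz
  obtain ⟨n, hn, l, hl, rfl⟩ := Submodule.mem_sup.mp hz
  rw [map_add, LinearMap.add_apply, hN n hn, hL l hl, add_zero]

theorem orthogonal_inf {K V : Type*} [Field K] [AddCommGroup V] [Module K V]
    [FiniteDimensional K V] {B : BilinForm K V} (hB : B.Nondegenerate) (hB₀ : B.IsRefl)
    (N L : Submodule K V) :
    B.orthogonal (N ⊓ L) = B.orthogonal N ⊔ B.orthogonal L := by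
  conv_rhs => rw [← orthogonal_orthogonal hB hB₀ (B.orthogonal N ⊔ B.orthogonal L),
    orthogonal_sup, orthogonal_orthogonal hB hB₀, orthogonal_orthogonal hB hB₀]

theorem IsSymm.nondegenerate_of_posDef {V : Type*} [AddCommGroup V] [Module ℝ V]
    {B : BilinForm ℝ V} (hB : B.IsSymm) (hpos : B.toQuadraticMap.PosDef) : B.Nondegenerate :=
  hB.isRefl.nondegenerate_iff_separatingLeft.mpr (separatingLeft_of_anisotropic hpos.anisotropic)

end LinearMap.BilinForm

section SelfDualCone

variable {V : Type*} [AddCommGroup V] [Module ℝ V] {B : BilinForm ℝ V}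
  {K K₁ K₂ : Set V}

theorem zero_mem_of_nonneg_smul_mem {S : Set V}
    (hne : S.Nonempty) (hcone : ∀ c : ℝ, 0 ≤ c → ∀ x ∈ S, c • x ∈ S) : 0 ∈ S := by
  obtain ⟨x, hx⟩ := hne
  simpa using hcone 0 le_rfl x hx

theorem inter_orthogonal_subset_left_of_subset_dual (hpos : B.toQuadraticMap.PosDef)
    (hsd : K ⊆ PointedCone.dual B K) (hsum : K = K₁ + K₂) (h0₁ : 0 ∈ K₁) (h0₂ : 0 ∈ K₂) :
    K ∩ {x | ∀ y ∈ K₂, B x y = 0} ⊆ K₁ := by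
  subst hsum
  rintro _ ⟨⟨x₁, hx₁, x₂, hx₂, rfl⟩, horth⟩
  have hcross : 0 ≤ B x₁ x₂ := hsd ⟨0, h0₁, x₂, hx₂, zero_add x₂⟩ ⟨x₁, hx₁, 0, h0₂, add_zero x₁⟩
  have hself : B x₂ x₂ ≤ 0 := by
    have horth₂ := horth x₂ hx₂
    rw [map_add, LinearMap.add_apply] at horth₂
    linarith
  obtain rfl : x₂ = 0 := by
    by_contra hne
    exact (hpos x₂ hne).not_ge hself
  simpa using hx₁

theorem mem_inter_orthogonal_of_selfDual (hB : B.IsSymm) (hsd : K = PointedCone.dual B K)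
    (hsum : K = K₁ + K₂) (h0₂ : 0 ∈ K₂) {u v : V} (hx : u + v ∈ K)
    (hu : u ∈ B.orthogonal (Submodule.span ℝ K₂)) (hv : v ∈ B.orthogonal (Submodule.span ℝ K₁)) :
    u ∈ K ∩ {x | ∀ y ∈ K₂, B x y = 0} := by
  refine ⟨hsd.ge (PointedCone.mem_dual.mpr fun k hk => ?_),
    fun y hy => (hB.eq u y).trans (hu y (Submodule.subset_span hy))⟩
  obtain ⟨k₁, hk₁, k₂, hk₂, rfl⟩ := hsum ▸ hk
  have hk₁K : k₁ ∈ K := hsum ▸ ⟨k₁, hk₁, 0, h0₂, add_zero k₁⟩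
  have hpair : B (k₁ + k₂) u = B k₁ (u + v) := by
    simp only [map_add, LinearMap.add_apply, hu k₂ (Submodule.subset_span hk₂),
      hv k₁ (Submodule.subset_span hk₁), add_zero]
  exact hpair ▸ hsd.le hx hk₁K

theorem eq_inter_orthogonal_of_selfDual [FiniteDimensional ℝ V] (hB : B.IsSymm)
    (hpos : B.toQuadraticMap.PosDef) (hsd : K = PointedCone.dual B K) (hsum : K = K₁ + K₂)
    (h0₁ : 0 ∈ K₁) (h0₂ : 0 ∈ K₂)
    (hspan : Submodule.span ℝ K₁ ⊓ Submodule.span ℝ K₂ = ⊥) :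
    K₁ = K ∩ {x | ∀ y ∈ K₂, B x y = 0} := by
  have hsum' : K = K₂ + K₁ := hsum.trans (add_comm K₁ K₂)
  refine subset_antisymm (fun x hx => ?_)
    (inter_orthogonal_subset_left_of_subset_dual hpos hsd.le hsum h0₁ h0₂)
  have hxK : x ∈ K := hsum ▸ ⟨x, hx, 0, h0₂, add_zero x⟩
  have hdecomp : x ∈ B.orthogonal (Submodule.span ℝ K₂) ⊔ B.orthogonal (Submodule.span ℝ K₁) := by
    rw [← LinearMap.BilinForm.orthogonal_inf (hB.nondegenerate_of_posDef hpos) hB.isRefl,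
      inf_comm, hspan, LinearMap.BilinForm.orthogonal_bot]
    exact Submodule.mem_top
  obtain ⟨u, hu, v, hv, rfl⟩ := Submodule.mem_sup.mp hdecomp
  have hu₁ := mem_inter_orthogonal_of_selfDual hB hsd hsum h0₂ hxK hu hv
  have hv₁ := mem_inter_orthogonal_of_selfDual hB hsd hsum' h0₁ (add_comm u v ▸ hxK) hv hu
  have hv₂ : v ∈ K₂ := inter_orthogonal_subset_left_of_subset_dual hpos hsd.le hsum' h0₂ h0₁ hv₁
  have hu₂ : u ∈ K₁ := inter_orthogonal_subset_left_of_subset_dual hpos hsd.le hsum h0₁ h0₂ hu₁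
  obtain rfl : v = 0 := by
    have hvL₁ : v ∈ Submodule.span ℝ K₁ := by
      simpa using sub_mem (Submodule.subset_span hx) (Submodule.subset_span hu₂)
    exact (Submodule.mem_bot ℝ).mp (hspan ▸ ⟨hvL₁, Submodule.subset_span hv₂⟩)
  simpa using hu₁

end SelfDualCone

theorem summand_eq_inter_orthogonal_of_selfDual_general
    {d : ℕ} (K K₁ K₂ : Set (Fin d → ℝ))
    (A : Matrix (Fin d) (Fin d) ℝ) (hA : A.PosDef)
    (hsd : K = {y : Fin d → ℝ | ∀ x ∈ K, 0 ≤ x ⬝ᵥ A.mulVec y})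
    (hK₁cone : ∀ (c : ℝ), 0 ≤ c → ∀ x ∈ K₁, c • x ∈ K₁)
    (hK₁ne : K₁.Nonempty)
    (hK₂cone : ∀ (c : ℝ), 0 ≤ c → ∀ x ∈ K₂, c • x ∈ K₂)
    (hK₂ne : K₂.Nonempty)
    (hsum : K = K₁ + K₂)
    (hspan : Submodule.span ℝ K₁ ⊓ Submodule.span ℝ K₂ = ⊥) :
    K₁ = K ∩ {x : Fin d → ℝ | ∀ y ∈ K₂, x ⬝ᵥ A.mulVec y = 0} ∧
      ∀ x ∈ K₁, ∀ y ∈ K₂, x ⬝ᵥ A.mulVec y = 0 := by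
  have hB : (Matrix.toBilin' A).IsSymm :=
    Matrix.isSymm_toBilin'_iff_isSymm.mpr (Matrix.isHermitian_iff_isSymm.mp hA.isHermitian)
  have hpos : (Matrix.toBilin' A).toQuadraticMap.PosDef := hA.toQuadraticForm'
  have hsd' : K = PointedCone.dual (Matrix.toBilin' A) K :=
    hsd.trans (by ext; simp [Matrix.toBilin'_apply'])
  have hK₁ := eq_inter_orthogonal_of_selfDual hB hpos hsd' hsum
    (zero_mem_of_nonneg_smul_mem hK₁ne hK₁cone) (zero_mem_of_nonneg_smul_mem hK₂ne hK₂cone) hspan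
  simp only [Matrix.toBilin'_apply'] at hK₁
  exact ⟨hK₁, fun x hx => (hK₁ ▸ hx).2⟩

/-- If `K ⊆ ℝ^d` is a polyhedral cone, self-dual with respect to the inner
product `⟨x,y⟩ = xᵀ A y`, and `K = K₁ + K₂` with `K₁, K₂` nonzero closed convex cones
whose spans intersect trivially, then `K₁ = K ∩ K₂^⊥`; in particular `K₁` and `K₂` are
orthogonal for that inner product. -/
theorem summand_eq_inter_orthogonal_of_selfDual
    {d : ℕ} (K K₁ K₂ : Set (Fin d → ℝ))
    (hpoly : IsPolyhedralCone K)
    (A : Matrix (Fin d) (Fin d) ℝ) (hA : A.PosDef)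
    (hsd : K = {y : Fin d → ℝ | ∀ x ∈ K, 0 ≤ x ⬝ᵥ A.mulVec y})
    (hK₁closed : IsClosed K₁) (hK₁conv : Convex ℝ K₁)
    (hK₁cone : ∀ (c : ℝ), 0 ≤ c → ∀ x ∈ K₁, c • x ∈ K₁)
    (hK₁ne : K₁.Nonempty) (hK₁nz : K₁ ≠ {0})
    (hK₂closed : IsClosed K₂) (hK₂conv : Convex ℝ K₂)
    (hK₂cone : ∀ (c : ℝ), 0 ≤ c → ∀ x ∈ K₂, c • x ∈ K₂)
    (hK₂ne : K₂.Nonempty) (hK₂nz : K₂ ≠ {0})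
    (hsum : K = K₁ + K₂)
    (hspan : Submodule.span ℝ K₁ ⊓ Submodule.span ℝ K₂ = ⊥) :
    K₁ = K ∩ {x : Fin d → ℝ | ∀ y ∈ K₂, x ⬝ᵥ A.mulVec y = 0} ∧
      ∀ x ∈ K₁, ∀ y ∈ K₂, x ⬝ᵥ A.mulVec y = 0 :=
  summand_eq_inter_orthogonal_of_selfDual_general K K₁ K₂ A hA hsd hK₁cone hK₁ne hK₂cone hK₂ne hsum
    hspan
end

section
/- Let K ⊆ R^d be a pointed full-dimensional polyhedral cone with n extreme rays. If M ∈ S(K) is a positive semidefinite slack matrix of K of rank d and M = X X^T with X ∈ R^{n×d} and rank(X) = d, then the cone generated by the rows of X is equal to its own Euclidean dual cone. -/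
open Matrix Pointwise

/-- The Euclidean dual cone of `K ⊆ ℝ^d`. -/
def eucDual {d : ℕ} (K : Set (Fin d → ℝ)) : Set (Fin d → ℝ) :=
  {y | ∀ x ∈ K, 0 ≤ x ⬝ᵥ y}

/-- The convex cone generated by the vectors `v 0, …, v (n-1)`. -/
def coneGenBy {n : ℕ} {V : Type*} [AddCommMonoid V] [Module ℝ V] (v : Fin n → V) : Set V :=
  {x | ∃ c : Fin n → ℝ, (∀ i, 0 ≤ c i) ∧ x = ∑ i, c i • v i}

/-- `r` generates an extreme ray of the cone `K`. -/
def IsExtremeRayGen {d : ℕ} (K : Set (Fin d → ℝ)) (r : Fin d → ℝ) : Prop :=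
  r ≠ 0 ∧ r ∈ K ∧
    ∀ x ∈ K, ∀ y ∈ K, (∃ c : ℝ, 0 ≤ c ∧ x + y = c • r) →
      (∃ a : ℝ, 0 ≤ a ∧ x = a • r) ∧ (∃ b : ℝ, 0 ≤ b ∧ y = b • r)

/-- The family `v` consists of generators of the distinct extreme rays of `K`,
one generator per extreme ray, covering all extreme rays of `K`. -/
def GensDistinctExtremeRays {d n : ℕ} (K : Set (Fin d → ℝ))
    (v : Fin n → (Fin d → ℝ)) : Prop :=
  (∀ i, IsExtremeRayGen K (v i)) ∧
  (∀ i j, i ≠ j → ∀ c : ℝ, v i ≠ c • v j) ∧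
  (∀ r, IsExtremeRayGen K r → ∃ i, ∃ c : ℝ, 0 < c ∧ r = c • v i)

/-- `M` is a slack matrix of the cone `K`: `M i j = ⟨x i, y j⟩` where the `x i`
generate the distinct extreme rays of `K` and the `y j` generate the distinct
extreme rays of the (Euclidean) dual cone of `K`. -/
def IsSlackMatrix {d n m : ℕ} (M : Matrix (Fin n) (Fin m) ℝ)
    (K : Set (Fin d → ℝ)) : Prop :=
  ∃ (x : Fin n → (Fin d → ℝ)) (y : Fin m → (Fin d → ℝ)),
    GensDistinctExtremeRays K x ∧ GensDistinctExtremeRays (eucDual K) y ∧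
    ∀ i j, M i j = x i ⬝ᵥ y j

section Aux

variable {d : ℕ}

/-- A set closed under the convex-cone operations. -/
def IsRCone (C : Set (Fin d → ℝ)) : Prop :=
  (0 : Fin d → ℝ) ∈ C ∧ (∀ x ∈ C, ∀ y ∈ C, x + y ∈ C) ∧
    ∀ (r : ℝ), 0 ≤ r → ∀ x ∈ C, r • x ∈ C

lemma IsRCone.sum_mem {C : Set (Fin d → ℝ)} (hC : IsRCone C)
    {ι : Type*} (A : Finset ι) (f : ι → Fin d → ℝ) (h : ∀ i ∈ A, f i ∈ C) :
    (∑ i ∈ A, f i) ∈ C :=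
  Finset.sum_induction f (· ∈ C) (fun a b ha hb => hC.2.1 a ha b hb) hC.1 h

/-- The cone generated by a finite set of vectors. -/
def coneOf (S : Finset (Fin d → ℝ)) : Set (Fin d → ℝ) :=
  {x | ∃ c : (Fin d → ℝ) → ℝ, (∀ u, 0 ≤ c u) ∧ x = ∑ u ∈ S, c u • u}

lemma isRCone_coneOf {S : Finset (Fin d → ℝ)} : IsRCone (coneOf S) := by
  refine ⟨⟨0, fun u => le_refl 0, by simp⟩, ?_, ?_⟩
  · rintro x ⟨c, hc, rfl⟩ y ⟨c', hc', rfl⟩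
    exact ⟨c + c', fun u => add_nonneg (hc u) (hc' u),
      by simp [add_smul, Finset.sum_add_distrib]⟩
  · rintro r hr x ⟨c, hc, rfl⟩
    exact ⟨r • c, fun u => mul_nonneg hr (hc u),
      by simp [Finset.smul_sum, smul_smul]⟩

lemma mem_coneOf_self {S : Finset (Fin d → ℝ)} {u : Fin d → ℝ} (hu : u ∈ S) :
    u ∈ coneOf S := by
  classical
  refine ⟨fun w => if w = u then 1 else 0, fun w => by by_cases h : w = u <;> simp [h], ?_⟩
  have : ∀ w ∈ S, (if w = u then (1:ℝ) else 0) • w = (if w = u then w else 0) := by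
    intro w _; split <;> simp
  rw [Finset.sum_congr rfl this, Finset.sum_ite_eq' S u (fun w => w), if_pos hu]

lemma coneOf_subset {S : Finset (Fin d → ℝ)} {C : Set (Fin d → ℝ)}
    (hC : IsRCone C) (h : ∀ u ∈ S, u ∈ C) : coneOf S ⊆ C := by
  rintro x ⟨c, hc, rfl⟩
  exact hC.sum_mem _ _ fun u hu => hC.2.2 _ (hc u) _ (h u hu)

lemma isRCone_coneGenBy {n : ℕ} {v : Fin n → Fin d → ℝ} : IsRCone (coneGenBy v) := by
  refine ⟨⟨0, fun i => le_refl 0, by simp⟩, ?_, ?_⟩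
  · rintro x ⟨c, hc, rfl⟩ y ⟨c', hc', rfl⟩
    exact ⟨c + c', fun i => add_nonneg (hc i) (hc' i),
      by simp [add_smul, Finset.sum_add_distrib]⟩
  · rintro r hr x ⟨c, hc, rfl⟩
    exact ⟨r • c, fun i => mul_nonneg hr (hc i),
      by simp [Finset.smul_sum, smul_smul]⟩

lemma mem_coneGenBy_self {n : ℕ} {v : Fin n → Fin d → ℝ} (i : Fin n) :
    v i ∈ coneGenBy v := by
  classical
  refine ⟨fun j => if j = i then 1 else 0, fun j => by by_cases h : j = i <;> simp [h], ?_⟩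
  have : ∀ j ∈ Finset.univ, (if j = i then (1:ℝ) else 0) • v j
      = (if j = i then v j else 0) := by intro j _; split <;> simp
  rw [Finset.sum_congr rfl this, Finset.sum_ite_eq' Finset.univ i (fun j => v j),
    if_pos (Finset.mem_univ i)]

lemma coneGenBy_subset {n : ℕ} {v : Fin n → Fin d → ℝ} {C : Set (Fin d → ℝ)}
    (hC : IsRCone C) (h : ∀ i, v i ∈ C) : coneGenBy v ⊆ C := by
  rintro x ⟨c, hc, rfl⟩
  exact hC.sum_mem _ _ fun i _ => hC.2.2 _ (hc i) _ (h i)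

lemma coneGenBy_eq_coneOf_image {n : ℕ} (v : Fin n → Fin d → ℝ) :
    coneGenBy v = coneOf (Finset.image v Finset.univ) := by
  classical
  apply Set.Subset.antisymm
  · exact coneGenBy_subset isRCone_coneOf
      (fun i => mem_coneOf_self (Finset.mem_image_of_mem v (Finset.mem_univ i)))
  · refine coneOf_subset isRCone_coneGenBy ?_
    intro u hu
    obtain ⟨i, _, rfl⟩ := Finset.mem_image.mp hu
    exact mem_coneGenBy_self i

lemma sum_dotProduct' {ι : Type*} (A : Finset ι) (f : ι → Fin d → ℝ) (z : Fin d → ℝ) :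
    (∑ i ∈ A, f i) ⬝ᵥ z = ∑ i ∈ A, f i ⬝ᵥ z := by
  simp only [dotProduct, Finset.sum_apply, Finset.sum_mul]
  exact Finset.sum_comm

end Aux

section Pointed

variable {d : ℕ}

lemma pointed_sum_zero {K : Set (Fin d → ℝ)} (hK : IsRCone K)
    (hp : K ∩ (-K) = {0}) {ι : Type*} (A : Finset ι) (f : ι → Fin d → ℝ)
    (hf : ∀ i ∈ A, f i ∈ K) (hsum : ∑ i ∈ A, f i = 0) :
    ∀ i ∈ A, f i = 0 := by
  classical
  intro i0 hi0
  have hsplit : f i0 + ∑ i ∈ A.erase i0, f i = 0 := by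
    rw [Finset.add_sum_erase A f hi0]; exact hsum
  have hrest : (∑ i ∈ A.erase i0, f i) ∈ K :=
    hK.sum_mem _ _ fun i hi => hf i (Finset.mem_of_mem_erase hi)
  have h1 : f i0 ∈ K := hf i0 hi0
  have h2 : f i0 ∈ -K := by
    rw [Set.mem_neg]
    have hne : -f i0 = ∑ i ∈ A.erase i0, f i := by
      rw [neg_eq_iff_add_eq_zero]; exact hsplit
    rw [hne]; exact hrest
  have : f i0 ∈ K ∩ (-K) := ⟨h1, h2⟩
  rw [hp] at this
  exact this

lemma prune {K : Set (Fin d → ℝ)} (hK : IsRCone K) (hp : K ∩ (-K) = {0}) :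
    ∀ S : Finset (Fin d → ℝ), K = coneOf S →
      ∃ T : Finset (Fin d → ℝ), (∀ u ∈ T, IsExtremeRayGen K u) ∧ K ⊆ coneOf T := by
  classical
  intro S
  induction S using Finset.strongInduction with
  | _ S ih =>
    intro hKS
    by_cases hall : ∃ s ∈ S, s ≠ 0 ∧ ¬ IsExtremeRayGen K s
    · obtain ⟨s, hsS, hs0, hsne⟩ := hall
      have hsK : s ∈ K := by rw [hKS]; exact mem_coneOf_self hsS
      -- core claim: s is a nonneg combination of the other generators
      have hserase : s ∈ coneOf (S.erase s) := by
        have hnotall : ¬ ∀ x ∈ K, ∀ y ∈ K, (∃ c : ℝ, 0 ≤ c ∧ x + y = c • s) →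
            (∃ a : ℝ, 0 ≤ a ∧ x = a • s) ∧ (∃ b : ℝ, 0 ≤ b ∧ y = b • s) := by
          intro hforall; exact hsne ⟨hs0, hsK, hforall⟩
        push_neg at hnotall
        obtain ⟨x, hx, y, hy, ⟨c, hc, hxy⟩, hnot⟩ := hnotall
        obtain ⟨α, hα, hxe⟩ : x ∈ coneOf S := by rw [← hKS]; exact hx
        obtain ⟨β, hβ, hye⟩ : y ∈ coneOf S := by rw [← hKS]; exact hy
        have hγ0 : ∀ u, 0 ≤ α u + β u := fun u => add_nonneg (hα u) (hβ u)
        have hγsum : ∑ u ∈ S, (α u + β u) • u = c • s := by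
          rw [← hxy, hxe, hye, ← Finset.sum_add_distrib]
          exact Finset.sum_congr rfl fun u _ => by rw [add_smul]
        have hsplit : (α s + β s) • s + ∑ u ∈ S.erase s, (α u + β u) • u = c • s := by
          rw [Finset.add_sum_erase S (fun u => (α u + β u) • u) hsS]; exact hγsum
        have hR : ∑ u ∈ S.erase s, (α u + β u) • u = (c - (α s + β s)) • s := by
          rw [sub_smul]; exact eq_sub_of_add_eq' hsplit
        rcases lt_or_ge (α s + β s) c with hlt | hge
        · -- s is a positive multiple of a combination of the rest
          have hpos : 0 < c - (α s + β s) := by linarith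
          have hRmem : (∑ u ∈ S.erase s, (α u + β u) • u) ∈ coneOf (S.erase s) :=
            ⟨fun u => α u + β u, hγ0, rfl⟩
          have hmem := isRCone_coneOf.2.2 (c - (α s + β s))⁻¹ (by positivity) _ hRmem
          rwa [hR, smul_smul, inv_mul_cancel₀ (ne_of_gt hpos), one_smul] at hmem
        · -- contradiction with non-extremality
          exfalso
          have hFsum : ∑ u ∈ S,
              (if u = s then ((α s + β s) - c) • s else (α u + β u) • u) = 0 := by
            rw [← Finset.add_sum_erase S _ hsS, if_pos rfl,
              Finset.sum_congr rfl
                (fun u hu => if_neg (Finset.ne_of_mem_erase hu) :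
                  ∀ u ∈ S.erase s, _ = (α u + β u) • u),
              hR, ← add_smul, show (α s + β s) - c + (c - (α s + β s)) = 0 by ring,
              zero_smul]
          have hFK : ∀ u ∈ S,
              (if u = s then ((α s + β s) - c) • s else (α u + β u) • u) ∈ K := by
            intro u hu
            split
            · exact hK.2.2 _ (by linarith) _ hsK
            · exact hK.2.2 _ (hγ0 u) _ (by rw [hKS]; exact mem_coneOf_self hu)
          have hzero := pointed_sum_zero hK hp S _ hFK hFsum
          have key : ∀ u ∈ S.erase s, (α u + β u) • u = 0 := by
            intro u hu
            have := hzero u (Finset.mem_of_mem_erase hu)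
            rwa [if_neg (Finset.ne_of_mem_erase hu)] at this
          have hαz : ∀ u ∈ S.erase s, α u • u = 0 := by
            intro u hu
            rcases smul_eq_zero.mp (key u hu) with h | h
            · have h0 : α u = 0 := by have := hβ u; have := hα u; linarith
              rw [h0, zero_smul]
            · rw [h, smul_zero]
          have hβz : ∀ u ∈ S.erase s, β u • u = 0 := by
            intro u hu
            rcases smul_eq_zero.mp (key u hu) with h | h
            · have h0 : β u = 0 := by have := hβ u; have := hα u; linarith
              rw [h0, zero_smul]
            · rw [h, smul_zero]
          have hxs : x = α s • s := by
            rw [hxe, ← Finset.add_sum_erase S (fun u => α u • u) hsS,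
              Finset.sum_congr rfl hαz]
            simp
          have hys : y = β s • s := by
            rw [hye, ← Finset.add_sum_erase S (fun u => β u • u) hsS,
              Finset.sum_congr rfl hβz]
            simp
          exact hnot ⟨α s, hα s, hxs⟩ (β s) (hβ s) hys
      -- now K is generated by the smaller set
      have hKe : K = coneOf (S.erase s) := by
        apply Set.Subset.antisymm
        · rw [hKS]
          refine coneOf_subset isRCone_coneOf ?_
          intro u hu
          by_cases h : u = s
          · rw [h]; exact hserase
          · exact mem_coneOf_self (Finset.mem_erase.mpr ⟨h, hu⟩)
        · rw [hKS]
          exact coneOf_subset isRCone_coneOf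
            (fun u hu => mem_coneOf_self (Finset.mem_of_mem_erase hu))
      exact ih (S.erase s) (Finset.erase_ssubset hsS) hKe
    · push_neg at hall
      refine ⟨S.filter (fun u => IsExtremeRayGen K u),
        fun u hu => (Finset.mem_filter.mp hu).2, ?_⟩
      intro z hz
      rw [hKS] at hz
      refine coneOf_subset isRCone_coneOf ?_ hz
      intro u hu
      by_cases h : u = 0
      · rw [h]; exact isRCone_coneOf.1
      · exact mem_coneOf_self (Finset.mem_filter.mpr ⟨hu, hall u hu h⟩)

end Pointed

section Weyl

variable {d : ℕ}

lemma top_coneOf : ∃ T : Finset (Fin d → ℝ), ∀ z : Fin d → ℝ, z ∈ coneOf T := by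
  classical
  refine ⟨(Finset.image (fun i => Pi.single i (1:ℝ)) Finset.univ) ∪
    (Finset.image (fun i => Pi.single i (-1:ℝ)) Finset.univ), fun z => ?_⟩
  have hz : z = ∑ i : Fin d, Pi.single i (z i) := (Finset.univ_sum_single z).symm
  rw [hz]
  refine isRCone_coneOf.sum_mem _ _ fun i _ => ?_
  rcases le_or_gt 0 (z i) with h | h
  · have : Pi.single i (z i) = (z i) • (Pi.single i 1 : Fin d → ℝ) := by
      ext j; by_cases hj : j = i <;> simp [Pi.single_apply, hj]
    rw [this]
    exact isRCone_coneOf.2.2 _ h _ (mem_coneOf_self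
      (Finset.mem_union_left _ (Finset.mem_image_of_mem _ (Finset.mem_univ i))))
  · have : Pi.single i (z i) = (-(z i)) • (Pi.single i (-1) : Fin d → ℝ) := by
      ext j; by_cases hj : j = i <;> simp [Pi.single_apply, hj]
    rw [this]
    exact isRCone_coneOf.2.2 _ (by linarith) _ (mem_coneOf_self
      (Finset.mem_union_right _ (Finset.mem_image_of_mem _ (Finset.mem_univ i))))

/-- Double description step: intersecting a finitely generated cone with a halfspace
gives a finitely generated cone. -/
lemma dd_step (T : Finset (Fin d → ℝ)) (v : Fin d → ℝ) :
    ∃ T' : Finset (Fin d → ℝ),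
      coneOf T ∩ {z | 0 ≤ v ⬝ᵥ z} = coneOf T' := by
  classical
  refine ⟨(T.filter (fun u => 0 ≤ v ⬝ᵥ u)) ∪
    (((T ×ˢ T).filter (fun pq => 0 ≤ v ⬝ᵥ pq.1 ∧ v ⬝ᵥ pq.2 < 0)).image
      (fun pq => (v ⬝ᵥ pq.1) • pq.2 - (v ⬝ᵥ pq.2) • pq.1)), ?_⟩
  apply Set.Subset.antisymm
  · -- hard direction
    rintro z ⟨⟨c, hc, rfl⟩, hvz⟩
    set Tnn := T.filter (fun u => 0 ≤ v ⬝ᵥ u) with hTnn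
    set TN := T.filter (fun u => ¬ 0 ≤ v ⬝ᵥ u) with hTN
    have hsplitz : ∑ u ∈ T, c u • u = (∑ u ∈ Tnn, c u • u) + ∑ u ∈ TN, c u • u :=
      (Finset.sum_filter_add_sum_filter_not T _ _).symm
    set s := ∑ u ∈ Tnn, c u * (v ⬝ᵥ u) with hs
    set t := ∑ u ∈ TN, c u * (-(v ⬝ᵥ u)) with ht
    have hdot : ∀ (W : Finset (Fin d → ℝ)), v ⬝ᵥ (∑ u ∈ W, c u • u) = ∑ u ∈ W, c u * (v ⬝ᵥ u) := by
      intro W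
      rw [dotProduct_comm, sum_dotProduct']
      exact Finset.sum_congr rfl fun u _ => by rw [smul_dotProduct, dotProduct_comm]; rfl
    have hvz' : s - t = v ⬝ᵥ ∑ u ∈ T, c u • u := by
      rw [hsplitz, dotProduct_add, hdot, hdot, hs, ht, sub_eq_add_neg, ← Finset.sum_neg_distrib]
      congr 1
      exact Finset.sum_congr rfl fun u _ => by ring
    have hts : t ≤ s := by
      have h0 : (0:ℝ) ≤ v ⬝ᵥ ∑ u ∈ T, c u • u := hvz
      rw [← hvz'] at h0
      linarith
    have hTsub : ∀ u ∈ Tnn, u ∈ (T.filter (fun u => 0 ≤ v ⬝ᵥ u)) ∪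
        (((T ×ˢ T).filter (fun pq => 0 ≤ v ⬝ᵥ pq.1 ∧ v ⬝ᵥ pq.2 < 0)).image
          (fun pq => (v ⬝ᵥ pq.1) • pq.2 - (v ⬝ᵥ pq.2) • pq.1)) := by
      intro u hu
      exact Finset.mem_union_left _ hu
    by_cases ht0 : t = 0
    · -- all negative-side coefficients vanish
      have hTNzero : ∀ u ∈ TN, c u • u = 0 := by
        intro u hu
        obtain ⟨huT, hneg⟩ := Finset.mem_filter.mp hu
        have hneg' : v ⬝ᵥ u < 0 := not_le.mp hneg
        have hterm : c u * (-(v ⬝ᵥ u)) = 0 :=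
          (Finset.sum_eq_zero_iff_of_nonneg fun w hw =>
            mul_nonneg (hc w) (by
              have := not_le.mp (Finset.mem_filter.mp hw).2; linarith)).mp
            (ht.symm.trans ht0) u hu
        have hcu : c u = 0 := by
          rcases mul_eq_zero.mp hterm with h | h
          · exact h
          · exfalso; linarith
        rw [hcu, zero_smul]
      have hz2 : ∑ u ∈ T, c u • u = ∑ u ∈ Tnn, c u • u := by
        rw [hsplitz, Finset.sum_congr rfl hTNzero]
        simp
      rw [hz2]
      exact isRCone_coneOf.sum_mem _ _ fun u hu =>
        isRCone_coneOf.2.2 _ (hc u) _ (mem_coneOf_self (hTsub u hu))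
    · -- main double-description rewriting
      have htpos : 0 < t := lt_of_le_of_ne
        (Finset.sum_nonneg fun u hu => mul_nonneg (hc u)
          (by have := not_le.mp (Finset.mem_filter.mp hu).2; linarith)) (Ne.symm ht0)
      have hspos : 0 < s := lt_of_lt_of_le htpos hts
      have hs0' : s ≠ 0 := ne_of_gt hspos
      have key1 : ∀ j : Fin d,
          ∑ pq ∈ Tnn ×ˢ TN, ((c pq.1 * c pq.2)/s) *
            ((v ⬝ᵥ pq.1) * pq.2 j - (v ⬝ᵥ pq.2) * pq.1 j)
          = (∑ q ∈ TN, c q * q j) + (t/s) * ∑ p ∈ Tnn, c p * p j := by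
        intro j
        have hexp : ∀ pq ∈ Tnn ×ˢ TN, ((c pq.1 * c pq.2)/s) *
            ((v ⬝ᵥ pq.1) * pq.2 j - (v ⬝ᵥ pq.2) * pq.1 j)
            = (c pq.1 * (v ⬝ᵥ pq.1))/s * (c pq.2 * pq.2 j) +
              (c pq.1 * pq.1 j) * ((c pq.2 * (-(v ⬝ᵥ pq.2)))/s) := by
          intro pq _; ring
        rw [Finset.sum_congr rfl hexp, Finset.sum_add_distrib]
        congr 1
        · have h1 : ∑ pq ∈ Tnn ×ˢ TN, (c pq.1 * (v ⬝ᵥ pq.1))/s * (c pq.2 * pq.2 j)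
              = (∑ p ∈ Tnn, (c p * (v ⬝ᵥ p))/s) * (∑ q ∈ TN, c q * q j) := by
            rw [Finset.sum_mul_sum, Finset.sum_product]
          rw [h1, ← Finset.sum_div, ← hs, div_self hs0', one_mul]
        · have h2 : ∑ pq ∈ Tnn ×ˢ TN, (c pq.1 * pq.1 j) * ((c pq.2 * (-(v ⬝ᵥ pq.2)))/s)
              = (∑ p ∈ Tnn, c p * p j) * (∑ q ∈ TN, (c q * (-(v ⬝ᵥ q)))/s) := by
            rw [Finset.sum_mul_sum, Finset.sum_product]
          rw [h2, ← Finset.sum_div, ← ht]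
          ring
      have hid : ∑ u ∈ T, c u • u =
          (∑ p ∈ Tnn, ((1 - t/s) * c p) • p) +
          ∑ pq ∈ Tnn ×ˢ TN, ((c pq.1 * c pq.2)/s) •
            ((v ⬝ᵥ pq.1) • pq.2 - (v ⬝ᵥ pq.2) • pq.1) := by
        funext j
        have hL := congrFun hsplitz j
        simp only [Finset.sum_apply, Pi.add_apply, Pi.smul_apply, smul_eq_mul,
          Pi.sub_apply] at hL ⊢
        rw [hL, key1 j]
        have h3 : ∑ p ∈ Tnn, c p * p j
            = ∑ p ∈ Tnn, (((1 - t/s) * c p) * p j + t/s * (c p * p j)) :=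
          Finset.sum_congr rfl (fun p _ => by ring)
        conv_lhs => rw [h3]
        rw [Finset.sum_add_distrib, ← Finset.mul_sum]
        ring
      rw [hid]
      refine isRCone_coneOf.2.1 _ ?_ _ ?_
      · refine isRCone_coneOf.sum_mem _ _ fun p hp => ?_
        refine isRCone_coneOf.2.2 _ ?_ _ (mem_coneOf_self (hTsub p hp))
        have h1ts : t/s ≤ 1 := (div_le_one hspos).mpr hts
        have := hc p
        nlinarith
      · refine isRCone_coneOf.sum_mem _ _ fun pq hpq => ?_
        obtain ⟨hp, hq⟩ := Finset.mem_product.mp hpq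
        obtain ⟨hpT, hpnn⟩ := Finset.mem_filter.mp hp
        obtain ⟨hqT, hqn⟩ := Finset.mem_filter.mp hq
        refine isRCone_coneOf.2.2 _
          (div_nonneg (mul_nonneg (hc _) (hc _)) hspos.le) _ (mem_coneOf_self ?_)
        refine Finset.mem_union_right _ (Finset.mem_image.mpr ⟨pq, ?_, rfl⟩)
        exact Finset.mem_filter.mpr ⟨Finset.mem_product.mpr ⟨hpT, hqT⟩,
          hpnn, not_le.mp hqn⟩
  · -- easy direction
    refine coneOf_subset ?_ ?_
    · -- intersection is a cone
      refine ⟨⟨isRCone_coneOf.1, by simp⟩, ?_, ?_⟩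
      · rintro a ⟨ha, ha'⟩ b ⟨hb, hb'⟩
        refine ⟨isRCone_coneOf.2.1 a ha b hb, ?_⟩
        simp only [Set.mem_setOf_eq, dotProduct_add] at *
        linarith
      · rintro r hr a ⟨ha, ha'⟩
        refine ⟨isRCone_coneOf.2.2 r hr a ha, ?_⟩
        simp only [Set.mem_setOf_eq] at *
        rw [dotProduct_smul]
        exact mul_nonneg hr ha'
    · intro u hu
      rcases Finset.mem_union.mp hu with h | h
      · obtain ⟨huT, hvu⟩ := Finset.mem_filter.mp h
        exact ⟨mem_coneOf_self huT, hvu⟩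
      · obtain ⟨⟨p, q⟩, hpq, rfl⟩ := Finset.mem_image.mp h
        obtain ⟨hpqT, hp, hq⟩ := Finset.mem_filter.mp hpq
        obtain ⟨hpT, hqT⟩ := Finset.mem_product.mp hpqT
        constructor
        · have : (v ⬝ᵥ p) • q - (v ⬝ᵥ q) • p = (v ⬝ᵥ p) • q + (-(v ⬝ᵥ q)) • p := by
            rw [neg_smul, sub_eq_add_neg]
          rw [this]
          exact isRCone_coneOf.2.1 _ (isRCone_coneOf.2.2 _ hp _ (mem_coneOf_self hqT))
            _ (isRCone_coneOf.2.2 _ (by linarith) _ (mem_coneOf_self hpT))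
        · simp only [Set.mem_setOf_eq, dotProduct_sub, dotProduct_smul, smul_eq_mul]
          ring_nf
          exact le_refl _

end Weyl

section WeylMain

variable {d : ℕ}

lemma weyl : ∀ S : Finset (Fin d → ℝ),
    ∃ T : Finset (Fin d → ℝ), {z : Fin d → ℝ | ∀ u ∈ S, 0 ≤ u ⬝ᵥ z} = coneOf T := by
  classical
  intro S
  induction S using Finset.induction_on with
  | empty =>
    obtain ⟨T, hT⟩ := top_coneOf (d := d)
    exact ⟨T, Set.eq_of_subset_of_subset (fun z _ => hT z) (fun z _ => by simp)⟩
  | insert a S' hnotmem ih =>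
    obtain ⟨T, hT⟩ := ih
    obtain ⟨T', hT'⟩ := dd_step T a
    refine ⟨T', ?_⟩
    rw [← hT']
    ext z
    simp only [Set.mem_setOf_eq, Set.mem_inter_iff, Finset.mem_insert, ← hT,
      Set.mem_setOf_eq]
    constructor
    · intro h
      exact ⟨fun u hu => h u (Or.inr hu), h a (Or.inl rfl)⟩
    · rintro ⟨h1, h2⟩ u (rfl | hu)
      · exact h2
      · exact h1 u hu

lemma isRCone_eucDual {K : Set (Fin d → ℝ)} : IsRCone (eucDual K) := by
  refine ⟨fun x _ => by simp, ?_, ?_⟩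
  · intro a ha b hb x hx
    rw [dotProduct_add]
    exact add_nonneg (ha x hx) (hb x hx)
  · intro r hr a ha x hx
    rw [dotProduct_smul]
    exact mul_nonneg hr (ha x hx)

/-- The dual of a cone generated by the family `v` is cut out by the
inequalities given by the `v i`. -/
lemma eucDual_coneGenBy {n : ℕ} (v : Fin n → Fin d → ℝ) :
    eucDual (coneGenBy v) = {z : Fin d → ℝ | ∀ i, 0 ≤ v i ⬝ᵥ z} := by
  ext z
  constructor
  · intro hz i
    exact hz _ (mem_coneGenBy_self i)
  · rintro hz x ⟨c, hc, rfl⟩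
    rw [sum_dotProduct']
    refine Finset.sum_nonneg fun i _ => ?_
    rw [smul_dotProduct]
    exact mul_nonneg (hc i) (hz i)

/-- A vector orthogonal to a spanning set is zero. -/
lemma eq_zero_of_forall_dot {w : Fin d → ℝ} {s : Set (Fin d → ℝ)}
    (hs : Submodule.span ℝ s = ⊤) (h : ∀ u ∈ s, u ⬝ᵥ w = 0) : w = 0 := by
  let φ : (Fin d → ℝ) →ₗ[ℝ] ℝ :=
    { toFun := fun u => u ⬝ᵥ w
      map_add' := fun a b => add_dotProduct a b w
      map_smul' := fun r a => smul_dotProduct r a w }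
  have hker : Submodule.span ℝ s ≤ LinearMap.ker φ :=
    Submodule.span_le.mpr fun u hu => h u hu
  rw [hs] at hker
  have hw : φ w = 0 := hker (Submodule.mem_top)
  exact dotProduct_self_eq_zero.mp hw

/-- Pointedness of the dual of a full-dimensional cone. -/
lemma eucDual_pointed {K : Set (Fin d → ℝ)} (hfull : Submodule.span ℝ K = ⊤) :
    eucDual K ∩ (-(eucDual K)) = {0} := by
  apply Set.Subset.antisymm
  · rintro z ⟨h1, h2⟩
    rw [Set.mem_neg] at h2
    have : ∀ u ∈ K, u ⬝ᵥ z = 0 := by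
      intro u hu
      have ha := h1 u hu
      have hb := h2 u hu
      rw [dotProduct_neg] at hb
      linarith
    have := eq_zero_of_forall_dot hfull this
    simp [this]
  · intro z hz
    rw [Set.mem_singleton_iff] at hz
    subst hz
    refine ⟨fun x _ => by simp, ?_⟩
    rw [Set.mem_neg, neg_zero]
    exact fun x _ => by simp

end WeylMain

section Assemble

variable {d : ℕ}

lemma cone_eq_coneGenBy_of_gens {n : ℕ} {K : Set (Fin d → ℝ)} (hK : IsRCone K)
    (hp : K ∩ (-K) = {0}) {S : Finset (Fin d → ℝ)} (hKS : K = coneOf S)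
    {x : Fin n → Fin d → ℝ} (hx1 : ∀ i, x i ∈ K)
    (hx3 : ∀ r, IsExtremeRayGen K r → ∃ i, ∃ c : ℝ, 0 < c ∧ r = c • x i) :
    K = coneGenBy x := by
  apply Set.Subset.antisymm
  · obtain ⟨T, hText, hKT⟩ := prune hK hp S hKS
    refine hKT.trans (coneOf_subset isRCone_coneGenBy ?_)
    intro u hu
    obtain ⟨i, c, hc, rfl⟩ := hx3 u (hText u hu)
    exact isRCone_coneGenBy.2.2 _ hc.le _ (mem_coneGenBy_self i)
  · exact coneGenBy_subset hK hx1

end Assemble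


/-- If a slack matrix `M` of a pointed full-dimensional polyhedral cone
`K ⊆ ℝ^d` is positive semidefinite of rank `d` and `M = X Xᵀ` with `rank X = d`, then
the cone generated by the rows of `X` equals its own Euclidean dual cone. -/
theorem coneRows_selfDual_of_psd_slack_factorization
    {d n : ℕ} (K : Set (Fin d → ℝ))
    (hpoly : IsPolyhedralCone K) (hpointed : K ∩ (-K) = {0})
    (hfull : Submodule.span ℝ K = ⊤)
    (M : Matrix (Fin n) (Fin n) ℝ) (hslack : IsSlackMatrix M K)
    (hpsd : M.PosSemidef) (hMrank : M.rank = d)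
    (X : Matrix (Fin n) (Fin d) ℝ) (hfact : M = X * Xᵀ) (hXrank : X.rank = d) :
    coneGenBy (fun i => X i) = eucDual (coneGenBy (fun i => X i)) := by
  classical
  obtain ⟨x, y, hx, hy, hM⟩ := hslack
  obtain ⟨N, vK, hKv⟩ : ∃ (N : ℕ) (v : Fin N → (Fin d → ℝ)), K = coneGenBy v := hpoly
  have hKcone : IsRCone K := hKv ▸ isRCone_coneGenBy
  have hKS : K = coneOf (Finset.image vK Finset.univ) := by
    rw [hKv, coneGenBy_eq_coneOf_image]
  -- K is generated by its extreme rays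
  have hKx : K = coneGenBy x := cone_eq_coneGenBy_of_gens hKcone hpointed hKS
    (fun i => (hx.1 i).2.1) hx.2.2
  -- the dual cone of K is finitely generated (Weyl), hence generated by
  -- its extreme rays, which are the y j
  have hdualS : ∃ T : Finset (Fin d → ℝ), eucDual K = coneOf T := by
    obtain ⟨T, hT⟩ := weyl (Finset.image vK Finset.univ)
    refine ⟨T, ?_⟩
    rw [hKv, eucDual_coneGenBy, ← hT]
    ext z
    simp only [Set.mem_setOf_eq]
    constructor
    · intro h u hu
      obtain ⟨i, _, rfl⟩ := Finset.mem_image.mp hu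
      exact h i
    · intro h i
      exact h _ (Finset.mem_image_of_mem vK (Finset.mem_univ i))
  obtain ⟨TD, hTD⟩ := hdualS
  have hDy : eucDual K = coneGenBy y :=
    cone_eq_coneGenBy_of_gens isRCone_eucDual (eucDual_pointed hfull) hTD
      (fun j => (hy.1 j).2.1) hy.2.2
  -- spanning properties
  have hxspan : Submodule.span ℝ (Set.range x) = ⊤ := by
    rw [eq_top_iff, ← hfull]
    refine Submodule.span_le.mpr ?_
    intro w hw
    rw [hKx] at hw
    obtain ⟨c, hc, rfl⟩ := hw
    show _ ∈ Submodule.span ℝ (Set.range x)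
    exact Submodule.sum_mem _ fun i _ =>
      Submodule.smul_mem _ _ (Submodule.subset_span ⟨i, rfl⟩)
  have hAker : ∀ w : Fin d → ℝ, (∀ i, x i ⬝ᵥ w = 0) → w = 0 := fun w h =>
    eq_zero_of_forall_dot hxspan (by rintro u ⟨i, rfl⟩; exact h i)
  have hXspan : Submodule.span ℝ (Set.range X) = ⊤ := by
    apply Submodule.eq_top_of_finrank_eq
    have hrk := Matrix.rank_eq_finrank_span_row X
    rw [hXrank] at hrk
    rw [Module.finrank_fin_fun]
    exact hrk.symm
  have hXker : ∀ w : Fin d → ℝ, X *ᵥ w = 0 → w = 0 := by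
    intro w h
    refine eq_zero_of_forall_dot hXspan ?_
    rintro u ⟨i, rfl⟩
    simpa [Matrix.mulVec, dotProduct] using congrFun h i
  -- matrices of generators
  set A : Matrix (Fin n) (Fin d) ℝ := Matrix.of x with hA
  set B : Matrix (Fin n) (Fin d) ℝ := Matrix.of y with hB
  have hMAB : M = A * Bᵀ := by
    ext i j
    rw [hM i j, Matrix.mul_apply]
    simp [dotProduct, hA, hB]
  set Q : Matrix (Fin d) (Fin d) ℝ := Aᵀ * A with hQ
  have hQdet : IsUnit Q.det := by
    rw [isUnit_iff_ne_zero]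
    intro hdet
    obtain ⟨w, hw0, hww⟩ := (Matrix.exists_mulVec_eq_zero_iff).mpr hdet
    apply hw0
    have h2 : w ⬝ᵥ (Q *ᵥ w) = (A *ᵥ w) ⬝ᵥ (A *ᵥ w) := by
      rw [hQ, ← Matrix.mulVec_mulVec, Matrix.dotProduct_mulVec, Matrix.vecMul_transpose]
    rw [hww, dotProduct_zero] at h2
    have h3 : A *ᵥ w = 0 := dotProduct_self_eq_zero.mp h2.symm
    exact hAker w (fun i => by simpa [Matrix.mulVec, dotProduct, hA] using congrFun h3 i)
  have hQQ : Q⁻¹ * Q = 1 := Matrix.nonsing_inv_mul Q hQdet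
  set P : Matrix (Fin n) (Fin n) ℝ := A * Q⁻¹ * Aᵀ with hP
  have hPM : P * M = M := by
    rw [hMAB]
    have e1 : P * (A * Bᵀ) = A * (Q⁻¹ * Q) * Bᵀ := by
      simp only [hP, hQ, Matrix.mul_assoc]
    rw [e1, hQQ, Matrix.mul_one]
  have hQsymm : Qᵀ = Q := by
    rw [hQ, Matrix.transpose_mul, Matrix.transpose_transpose]
  have hPsymm : Pᵀ = P := by
    rw [hP, Matrix.transpose_mul, Matrix.transpose_mul, Matrix.transpose_transpose,
      Matrix.transpose_nonsing_inv, hQsymm, Matrix.mul_assoc]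
  have hEM : X * Xᵀ = M := hfact.symm
  have hPE : P * (X * Xᵀ) = X * Xᵀ := by rw [hEM]; exact hPM
  have hEsymm : (X * Xᵀ)ᵀ = X * Xᵀ := by
    rw [Matrix.transpose_mul, Matrix.transpose_transpose]
  have hEP : (X * Xᵀ) * P = X * Xᵀ := by
    have h := congrArg Matrix.transpose hPE
    rwa [Matrix.transpose_mul, hEsymm, hPsymm] at h
  have hPX : P * X = X := by
    have hNN : (P * X - X) * (P * X - X)ᵀ = 0 := by
      rw [Matrix.transpose_sub, Matrix.transpose_mul, Matrix.sub_mul, Matrix.mul_sub,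
        Matrix.mul_sub, hPsymm]
      have h1 : P * X * (Xᵀ * P) = X * Xᵀ := by
        rw [show P * X * (Xᵀ * P) = (P * (X * Xᵀ)) * P by simp only [Matrix.mul_assoc],
          hPE, hEP]
      have h2 : P * X * Xᵀ = X * Xᵀ := by
        rw [show P * X * Xᵀ = P * (X * Xᵀ) by simp only [Matrix.mul_assoc], hPE]
      have h3 : X * (Xᵀ * P) = X * Xᵀ := by
        rw [show X * (Xᵀ * P) = (X * Xᵀ) * P by simp only [Matrix.mul_assoc], hEP]
      rw [h1, h2, h3]
      simp
    have hzero : P * X - X = 0 := by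
      have hrow : ∀ i, (P * X - X) i = 0 := by
        intro i
        apply dotProduct_self_eq_zero.mp
        have h4 := congrFun (congrFun hNN i) i
        rw [Matrix.mul_apply] at h4
        simp only [Matrix.transpose_apply] at h4
        simpa [dotProduct] using h4
      funext i j
      have := congrFun (hrow i) j
      simpa using this
    rwa [sub_eq_zero] at hzero
  set G : Matrix (Fin d) (Fin d) ℝ := Q⁻¹ * (Aᵀ * X) with hG
  have hXAG : X = A * G := by
    rw [← hPX]
    simp only [hP, hG, Matrix.mul_assoc]
  have hGker : ∀ w : Fin d → ℝ, G *ᵥ w = 0 → w = 0 := by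
    intro w h
    apply hXker
    rw [hXAG, ← Matrix.mulVec_mulVec, h, Matrix.mulVec_zero]
  have hcancel : ∀ (C D : Matrix (Fin d) (Fin n) ℝ), A * C = A * D → C = D := by
    intro C D h
    have hzero : ∀ w : Fin d → ℝ, A *ᵥ w = 0 → w = 0 := fun w hw' =>
      hAker w (fun i => by simpa [Matrix.mulVec, dotProduct, hA] using congrFun hw' i)
    funext k j
    have hw : A *ᵥ (fun l => C l j - D l j) = 0 := by
      funext i
      have h5 := congrFun (congrFun h i) j
      simp only [Matrix.mul_apply] at h5
      simp only [Matrix.mulVec, dotProduct, mul_sub, Finset.sum_sub_distrib, h5,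
        sub_self, Pi.zero_apply]
    have := congrFun (hzero _ hw) k
    simpa [sub_eq_zero] using this
  have hBGX : Bᵀ = G * Xᵀ := by
    apply hcancel
    rw [← hMAB, hfact, hXAG]
    simp only [Matrix.mul_assoc]
  have hXrow : ∀ i, (X i : Fin d → ℝ) = (x i) ᵥ* G := by
    intro i
    funext j
    have h6 := congrFun (congrFun hXAG i) j
    rw [h6]
    simp [Matrix.mul_apply, Matrix.vecMul, dotProduct, hA]
  have hyrow : ∀ j, y j = G *ᵥ (X j) := by
    intro j
    funext k
    have h7 := congrFun (congrFun hBGX k) j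
    simp only [Matrix.transpose_apply, Matrix.mul_apply, hB, Matrix.of_apply] at h7
    rw [h7]
    simp [Matrix.mulVec, dotProduct, mul_comm]
  -- final assembly
  apply Set.Subset.antisymm
  · -- the cone is contained in its dual
    rintro w ⟨cw, hcw, rfl⟩
    intro u hu
    obtain ⟨cu, hcu, rfl⟩ := hu
    rw [sum_dotProduct']
    refine Finset.sum_nonneg fun i _ => ?_
    rw [smul_dotProduct]
    refine mul_nonneg (hcu i) ?_
    rw [dotProduct_comm, sum_dotProduct']
    refine Finset.sum_nonneg fun j _ => ?_
    rw [smul_dotProduct]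
    refine mul_nonneg (hcw j) ?_
    have hMij : (X j : Fin d → ℝ) ⬝ᵥ X i = x j ⬝ᵥ y i := by
      calc (X j : Fin d → ℝ) ⬝ᵥ X i = (X * Xᵀ) j i := by
            simp [Matrix.mul_apply, dotProduct]
        _ = M j i := (congrFun (congrFun hfact j) i).symm
        _ = x j ⬝ᵥ y i := hM j i
    rw [hMij]
    exact (hy.1 i).2.1 (x j) ((hx.1 j).2.1)
  · -- the dual is contained in the cone
    intro z hz
    have hXz : ∀ i, (0:ℝ) ≤ X i ⬝ᵥ z := fun i => hz _ (mem_coneGenBy_self i)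
    have hGz : G *ᵥ z ∈ eucDual K := by
      intro w hw
      rw [hKx] at hw
      obtain ⟨c, hc, rfl⟩ := hw
      rw [sum_dotProduct']
      refine Finset.sum_nonneg fun i _ => ?_
      rw [smul_dotProduct]
      refine mul_nonneg (hc i) ?_
      rw [Matrix.dotProduct_mulVec, ← hXrow i]
      exact hXz i
    rw [hDy] at hGz
    obtain ⟨c, hc, hrep⟩ := hGz
    have hsum : G *ᵥ (∑ j, c j • (X j : Fin d → ℝ)) = ∑ j, c j • (G *ᵥ X j) := by
      calc G *ᵥ (∑ j, c j • (X j : Fin d → ℝ))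
          = G.mulVecLin (∑ j, c j • (X j : Fin d → ℝ)) := rfl
        _ = ∑ j, c j • G.mulVecLin (X j) := by
            rw [map_sum]
            exact Finset.sum_congr rfl fun j _ => by rw [LinearMap.map_smul]
        _ = ∑ j, c j • (G *ᵥ X j) := rfl
    have hz' : G *ᵥ z = G *ᵥ (∑ j, c j • (X j : Fin d → ℝ)) := by
      rw [hsum, hrep]
      exact Finset.sum_congr rfl fun j _ => by rw [hyrow j]
    have hdiff : G *ᵥ (z - ∑ j, c j • (X j : Fin d → ℝ)) = 0 := by
      rw [Matrix.mulVec_sub, hz', sub_self]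
    have h0 := hGker _ hdiff
    rw [sub_eq_zero] at h0
    exact ⟨c, hc, h0⟩
end

section
/- Let M = UV be a slack matrix of a pointed full-dimensional polyhedral cone K ⊆ R^d, where U ∈ R^{n×d} and V ∈ R^{d×m}. Then K is linearly isomorphic to the cone generated by the rows of U, and the Euclidean dual of that cone equals the cone generated by the columns of V. -/
open Matrix Pointwise

/-!
Minkowski's theorem (a salient finitely generated cone is the hull of any family meeting each of
its extreme rays) gives `K = cone(x)`. By Weyl's theorem (Fourier–Motzkin elimination) the dual
`K* = {y | 0 ≤ ⟨x_i, y⟩}` is finitely generated, and it is salient because `K` is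
full-dimensional, so Minkowski's theorem also gives `K* = cone(y)`. The `x_i` span `ℝ^d` since
`K` is full-dimensional, and the `y_j` span `ℝ^d` since `K` is salient, so `X = (x_i)` has a left
inverse and `Y = (y_j)` a right inverse. Then `X Y = U V` forces `U = X T` and `V = S Y` with
`S T = 1`: the rows of `U` are the images of the `x_i` under `Tᵀ`, and `S` maps `K*` onto the
dual of `Tᵀ K`, sending the `y_j` to the columns of `V`.
-/

open PointedCone

section Cones

variable {E F : Type*} [AddCommGroup E] [Module ℝ E] [AddCommGroup F] [Module ℝ F]

theorem coneGenBy_eq_hull {n : ℕ} (v : Fin n → E) :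
    coneGenBy v = (hull ℝ (Set.range v) : Set E) := by
  ext x
  simp only [coneGenBy, Set.mem_ofPred_eq, SetLike.mem_coe,
    Submodule.mem_span_range_iff_exists_fun]
  constructor
  · rintro ⟨c, hc, rfl⟩
    exact ⟨fun i => ⟨c i, hc i⟩, by simp only [Nonneg.mk_smul]⟩
  · rintro ⟨c, rfl⟩
    exact ⟨fun i => c i, fun i => (c i).2, by simp only [Nonneg.coe_smul]⟩

theorem span_coe_hull (s : Set E) : Submodule.span ℝ (hull ℝ s : Set E) = Submodule.span ℝ s :=
  le_antisymm (Submodule.span_le.2 (hull_le_span ℝ s)) (Submodule.span_mono subset_hull)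

theorem image_hull_range {ι : Type*} (f : E →ₗ[ℝ] F) (v : ι → E) :
    f '' (hull ℝ (Set.range v) : Set E) = hull ℝ (Set.range (f ∘ v)) := by
  rw [Set.range_comp]
  exact congrArg SetLike.coe (Submodule.map_span (f.restrictScalars {c : ℝ // 0 ≤ c}) _)

theorem mem_hull_finset_iff {s : Finset E} {x : E} :
    x ∈ hull ℝ (s : Set E) ↔ ∃ c : E → ℝ, (∀ a, 0 ≤ c a) ∧ ∑ a ∈ s, c a • a = x := by
  classical
  rw [Submodule.mem_span_finset]
  constructor
  · rintro ⟨c, -, rfl⟩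
    exact ⟨fun a => c a, fun a => (c a).2, by simp only [Nonneg.coe_smul]⟩
  · rintro ⟨c, hc, rfl⟩
    refine ⟨fun a => if a ∈ s then ⟨c a, hc a⟩ else 0, fun a ha => ?_, ?_⟩
    · by_contra h; exact ha (if_neg h)
    · exact Finset.sum_congr rfl fun a ha => by simp only [ha, if_true, Nonneg.mk_smul]

theorem exists_finset_hull_eq_and_notMem_hull_erase [DecidableEq E] (s : Finset E) :
    ∃ t ⊆ s, hull ℝ (t : Set E) = hull ℝ (s : Set E) ∧
      ∀ r ∈ t, r ∉ hull ℝ (t.erase r : Set E) := by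
  obtain ⟨t, hts, htmin⟩ := Finset.exists_min_image
    (s.powerset.filter fun t : Finset E => hull ℝ (t : Set E) = hull ℝ (s : Set E)) Finset.card
    ⟨s, by simp⟩
  simp only [Finset.mem_filter, Finset.mem_powerset] at hts htmin
  refine ⟨t, hts.1, hts.2, fun r hr hmem => ?_⟩
  have herase : hull ℝ (t.erase r : Set E) = hull ℝ (t : Set E) := by
    conv_rhs => rw [← Finset.insert_erase hr, Finset.coe_insert]
    exact (Submodule.span_insert_eq_span hmem).symm
  exact (Finset.card_erase_lt_of_mem hr).not_ge
    (htmin _ ⟨(Finset.erase_subset r t).trans hts.1, herase.trans hts.2⟩)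

end Cones

section Salient

variable {E : Type*} [AddCommGroup E] [Module ℝ E] {C : PointedCone ℝ E}

theorem eq_zero_of_add_eq_zero_of_salient (hC : (C : ConvexCone ℝ E).Salient) {a b : E}
    (ha : a ∈ C) (hb : b ∈ C) (hab : a + b = 0) : a = 0 := by
  by_contra ha0
  exact hC a ha ha0 (by rwa [neg_eq_of_add_eq_zero_right hab])

theorem convex_diff_zero_of_salient (hC : (C : ConvexCone ℝ E).Salient) :
    Convex ℝ ((C : Set E) \ {0}) := by
  rintro a ⟨ha, ha0⟩ b ⟨hb, hb0⟩ t u ht hu htu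
  refine ⟨C.convex ha hb ht hu htu, fun h0 => ?_⟩
  rcases ht.eq_or_lt with rfl | htpos
  · rw [zero_add] at htu
    simp [htu, hb0] at h0
  have hta : t • a = 0 := eq_zero_of_add_eq_zero_of_salient hC (C.smul_mem ht ha)
    (C.smul_mem hu hb) h0
  exact ha0 ((smul_eq_zero.1 hta).resolve_left htpos.ne')

end Salient

section Minkowski

variable {d : ℕ}

theorem isExtremeRayGen_of_notMem_hull {T : Set (Fin d → ℝ)} {r : Fin d → ℝ}
    (hC : (hull ℝ (insert r T) : ConvexCone ℝ (Fin d → ℝ)).Salient) (hr0 : r ≠ 0)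
    (hr : r ∉ hull ℝ T) : IsExtremeRayGen (hull ℝ (insert r T) : Set (Fin d → ℝ)) r := by
  refine ⟨hr0, subset_hull (Set.mem_insert r T), ?_⟩
  rintro a ha b hb ⟨c, -, hab⟩
  obtain ⟨α, a', ha', rfl⟩ := Submodule.mem_span_insert.1 ha
  obtain ⟨β, b', hb', rfl⟩ := Submodule.mem_span_insert.1 hb
  simp only [← Nonneg.coe_smul] at hab ⊢
  have hT : hull ℝ T ≤ hull ℝ (insert r T) := Submodule.span_mono (Set.subset_insert r T)
  have hsum : a' + b' = (c - α - β) • r := by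
    linear_combination (norm := module) hab
  -- a positive multiple would put `r` in `hull T`; otherwise salience forces `a' = b' = 0`
  rcases lt_or_ge 0 (c - α - β) with hpos | hnonpos
  · refine absurd ?_ hr
    rw [← inv_smul_smul₀ hpos.ne' r, ← hsum]
    exact (hull ℝ T).smul_mem (inv_nonneg.2 hpos.le) (add_mem ha' hb')
  have hrest : (α + β - c : ℝ) • r ∈ hull ℝ (insert r T) :=
    smul_mem _ (by linarith) (subset_hull (Set.mem_insert r T))
  have ha'0 : a' = 0 := eq_zero_of_add_eq_zero_of_salient hC (hT ha')
    (add_mem (hT hb') hrest) (by linear_combination (norm := module) hsum)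
  have hb'0 : b' = 0 := eq_zero_of_add_eq_zero_of_salient hC (hT hb')
    (add_mem (hT ha') hrest) (by linear_combination (norm := module) hsum)
  exact ⟨⟨α, α.2, by rw [ha'0, add_zero]⟩, ⟨β, β.2, by rw [hb'0, add_zero]⟩⟩

/-- Minkowski's theorem for polyhedral cones. -/
theorem hull_range_eq_of_forall_isExtremeRayGen {C : PointedCone ℝ (Fin d → ℝ)} (hfg : C.FG)
    (hC : (C : ConvexCone ℝ (Fin d → ℝ)).Salient) {ι : Type*} {x : ι → (Fin d → ℝ)}
    (hxC : ∀ i, x i ∈ C)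
    (hcover : ∀ r, IsExtremeRayGen (C : Set (Fin d → ℝ)) r → ∃ i, ∃ c : ℝ, 0 < c ∧ r = c • x i) :
    hull ℝ (Set.range x) = C := by
  classical
  refine le_antisymm (Submodule.span_le.2 (Set.range_subset_iff.2 hxC)) ?_
  obtain ⟨s, hs⟩ := hfg
  obtain ⟨t, -, ht, hirr⟩ := exists_finset_hull_eq_and_notMem_hull_erase s
  obtain rfl : hull ℝ (t : Set (Fin d → ℝ)) = C := ht.trans hs
  refine Submodule.span_le.2 fun r hr => ?_
  rcases eq_or_ne r 0 with rfl | hr0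
  · exact zero_mem _
  have hinsert : hull ℝ (t : Set (Fin d → ℝ)) = hull ℝ (insert r (t.erase r : Set _)) := by
    rw [← Finset.coe_insert, Finset.insert_erase hr]
  rw [hinsert] at hcover hC
  obtain ⟨i, c, hc, rfl⟩ := hcover r (isExtremeRayGen_of_notMem_hull hC hr0 (hirr r hr))
  exact smul_mem _ hc.le (subset_hull (Set.mem_range_self i))

end Minkowski

section FourierMotzkin

variable {E : Type*} [AddCommGroup E] [Module ℝ E]

theorem sum_sum_smul_sub_smul_eq (f : E →ₗ[ℝ] ℝ) (c : E → ℝ) (P N : Finset E) :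
    ∑ p ∈ P, ∑ n ∈ N, (c p * c n) • (f p • n - f n • p) =
      (∑ p ∈ P, c p * f p) • ∑ n ∈ N, c n • n - (∑ n ∈ N, c n * f n) • ∑ p ∈ P, c p • p := by
  rw [Finset.sum_smul_sum, Finset.sum_smul_sum, Finset.sum_comm (s := N),
    ← Finset.sum_sub_distrib]
  refine Finset.sum_congr rfl fun p _ => ?_
  rw [← Finset.sum_sub_distrib]
  exact Finset.sum_congr rfl fun n _ => by module

variable [DecidableEq E]

/-- One step of Fourier–Motzkin elimination: each pair `p, n` of generators on opposite sides
of the hyperplane `f = 0` is replaced by the combination `f p • n - f n • p` lying on it. -/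
noncomputable def fourierMotzkin (f : E →ₗ[ℝ] ℝ) (T : Finset E) : Finset E :=
  T.filter (0 ≤ f ·) ∪
    Finset.image₂ (fun p n => f p • n - f n • p) (T.filter (0 ≤ f ·)) (T.filter (¬ 0 ≤ f ·))

theorem hull_fourierMotzkin_le (f : E →ₗ[ℝ] ℝ) (T : Finset E) :
    hull ℝ (fourierMotzkin f T : Set E) ≤ hull ℝ (T : Set E) ⊓ (positive ℝ ℝ).comap f := by
  refine Submodule.span_le.2 fun g hg => ?_
  rcases Finset.mem_union.1 hg with hg | hg
  · obtain ⟨hgT, hfg⟩ := Finset.mem_filter.1 hg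
    exact ⟨subset_hull hgT, mem_comap.2 ((mem_positive ℝ ℝ).2 hfg)⟩
  obtain ⟨p, hp, n, hn, rfl⟩ := Finset.mem_image₂.1 hg
  obtain ⟨hpT, hfp⟩ := Finset.mem_filter.1 hp
  obtain ⟨hnT, hfn⟩ := Finset.mem_filter.1 hn
  refine ⟨?_, mem_comap.2 ((mem_positive ℝ ℝ).2 (by simp [mul_comm]))⟩
  rw [sub_eq_add_neg, ← neg_smul]
  exact add_mem (smul_mem _ hfp (subset_hull hnT))
    (smul_mem _ (by linarith [not_le.1 hfn]) (subset_hull hpT))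

theorem le_hull_fourierMotzkin (f : E →ₗ[ℝ] ℝ) (T : Finset E) :
    hull ℝ (T : Set E) ⊓ (positive ℝ ℝ).comap f ≤ hull ℝ (fourierMotzkin f T : Set E) := by
  rintro y ⟨hyT, hy⟩
  obtain ⟨c, hc, rfl⟩ := mem_hull_finset_iff.1 hyT
  set P := T.filter (0 ≤ f ·)
  set N := T.filter (¬ 0 ≤ f ·)
  set α := ∑ p ∈ P, c p * f p
  set β := ∑ n ∈ N, c n * f n
  have hsplit : ∑ a ∈ T, c a • a = ∑ p ∈ P, c p • p + ∑ n ∈ N, c n • n :=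
    (Finset.sum_filter_add_sum_filter_not _ _ _).symm
  have hαβ : 0 ≤ α + β := by
    simpa only [hsplit, map_add, map_sum, map_smul, smul_eq_mul] using
      (mem_positive ℝ ℝ).1 (mem_comap.1 hy)
  have hcfN : ∀ n ∈ N, c n * f n ≤ 0 := fun n hn =>
    mul_nonpos_of_nonneg_of_nonpos (hc n) (not_le.1 (Finset.mem_filter.1 hn).2).le
  have hP : ∑ p ∈ P, c p • p ∈ hull ℝ (fourierMotzkin f T : Set E) :=
    sum_mem fun p hp => smul_mem _ (hc p) (subset_hull (Finset.mem_union_left _ hp))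
  rw [hsplit]
  have hα0 : 0 ≤ α := Finset.sum_nonneg fun p hp => mul_nonneg (hc p) (Finset.mem_filter.1 hp).2
  rcases hα0.eq_or_lt with hα | hα
  · have hN : ∑ n ∈ N, c n • n = 0 := Finset.sum_eq_zero fun n hn => by
      have hcf := (Finset.sum_eq_zero_iff_of_nonpos hcfN).1
        (le_antisymm (Finset.sum_nonpos hcfN) (by linarith)) n hn
      rw [(mul_eq_zero.1 hcf).resolve_right (not_le.1 (Finset.mem_filter.1 hn).2).ne, zero_smul]
    rwa [hN, add_zero]
  have hQ : α • ∑ n ∈ N, c n • n - β • ∑ p ∈ P, c p • p ∈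
      hull ℝ (fourierMotzkin f T : Set E) := by
    rw [← sum_sum_smul_sub_smul_eq]
    refine sum_mem fun p hp => sum_mem fun n hn => smul_mem _ (mul_nonneg (hc p) (hc n)) ?_
    exact subset_hull (Finset.mem_union_right _ (Finset.mem_image₂_of_mem hp hn))
  have hy : ∑ p ∈ P, c p • p + ∑ n ∈ N, c n • n = ((α + β) / α) • ∑ p ∈ P, c p • p +
      α⁻¹ • (α • ∑ n ∈ N, c n • n - β • ∑ p ∈ P, c p • p) := by
    rw [smul_sub, smul_smul, inv_mul_cancel₀ hα.ne', one_smul, smul_smul, add_div,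
      div_self hα.ne']
    module
  rw [hy]
  exact add_mem (smul_mem _ (div_nonneg hαβ hα.le) hP) (smul_mem _ (inv_nonneg.2 hα.le) hQ)

end FourierMotzkin

theorem PointedCone.fg_inf_comap_positive {E : Type*} [AddCommGroup E] [Module ℝ E]
    {C : PointedCone ℝ E} (hC : C.FG) (f : E →ₗ[ℝ] ℝ) : (C ⊓ (positive ℝ ℝ).comap f).FG := by
  classical
  obtain ⟨T, rfl⟩ := hC
  exact ⟨fourierMotzkin f T,
    le_antisymm (hull_fourierMotzkin_le f T) (le_hull_fourierMotzkin f T)⟩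

section WeylTheorem

variable {M N : Type*} [AddCommGroup M] [Module ℝ M] [AddCommGroup N] [Module ℝ N]

theorem PointedCone.fg_top [Module.Finite ℝ N] : (⊤ : PointedCone ℝ N).FG := by
  classical
  obtain ⟨S, hS⟩ := Module.Finite.fg_top (R := ℝ) (M := N)
  refine ⟨S ∪ S.image Neg.neg, Submodule.eq_top_iff'.2 fun x => ?_⟩
  have hx : x ∈ Submodule.span ℝ (S : Set N) := hS ▸ Submodule.mem_top
  suffices x ∈ hull ℝ (↑(S ∪ S.image Neg.neg) : Set N) ∧
      -x ∈ hull ℝ (↑(S ∪ S.image Neg.neg) : Set N) from this.1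
  induction hx using Submodule.span_induction with
  | mem y hy => exact ⟨subset_hull (by simp [hy]), subset_hull (by simp [hy])⟩
  | zero => simp
  | add y z _ _ hy hz => exact ⟨add_mem hy.1 hz.1, by rw [neg_add]; exact add_mem hy.2 hz.2⟩
  | smul r y _ hy =>
    rcases le_or_gt 0 r with hr | hr
    · exact ⟨smul_mem _ hr hy.1, by rw [← smul_neg]; exact smul_mem _ hr hy.2⟩
    · refine ⟨?_, ?_⟩
      · rw [← neg_smul_neg]; exact smul_mem _ (by linarith) hy.2
      · rw [← neg_smul]; exact smul_mem _ (by linarith) hy.1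

/-- Weyl's theorem for polyhedral cones. -/
theorem PointedCone.fg_dual_of_finite [Module.Finite ℝ N] (p : M →ₗ[ℝ] N →ₗ[ℝ] ℝ) {s : Set M}
    (hs : s.Finite) : (dual p s).FG := by
  induction s, hs using Set.Finite.induction_on with
  | empty => rw [dual_empty]; exact fg_top
  | insert _ _ ih => rw [dual_insert, dual_singleton, inf_comm]; exact fg_inf_comap_positive ih _

end WeylTheorem

section Dual

variable {d : ℕ}

theorem salient_dual_of_span_eq_top {s : Set (Fin d → ℝ)} (hs : Submodule.span ℝ s = ⊤) :
    (dual (dotProductBilin ℝ ℝ) s : ConvexCone ℝ (Fin d → ℝ)).Salient := by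
  intro z hz hz0 hnz
  have hker : s ⊆ LinearMap.ker ((dotProductBilin ℝ ℝ).flip z) := fun a ha =>
    le_antisymm (by simpa using hnz ha) (hz ha)
  have hzz : z ⬝ᵥ z = 0 := by
    simpa using (Submodule.span_le.2 hker) (hs ▸ Submodule.mem_top : z ∈ Submodule.span ℝ s)
  exact hz0 (dotProduct_self_eq_zero.1 hzz)

/-- A strictly positive functional on the generators, obtained by separating `0` from their
convex hull, is an interior point of the dual cone. -/
theorem span_dual_eq_top_of_salient {ι : Type*} [Finite ι] {x : ι → (Fin d → ℝ)}
    (hC : (hull ℝ (Set.range x) : ConvexCone ℝ (Fin d → ℝ)).Salient) (hx0 : ∀ i, x i ≠ 0) :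
    Submodule.span ℝ (dual (dotProductBilin ℝ ℝ) (Set.range x) : Set (Fin d → ℝ)) = ⊤ := by
  have h0 : (0 : Fin d → ℝ) ∉ convexHull ℝ (Set.range x) := fun h =>
    (convexHull_min (by rintro _ ⟨i, rfl⟩; exact ⟨subset_hull ⟨i, rfl⟩, hx0 i⟩)
      (convex_diff_zero_of_salient hC) h).2 rfl
  obtain ⟨g, u, hg0, hgx⟩ := geometric_hahn_banach_point_closed (convex_convexHull ℝ _)
    ((Set.finite_range x).isCompact_convexHull ℝ).isClosed h0
  set w := (dotProductEquiv ℝ (Fin d)).symm g.toLinearMap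
  have hw : ∀ i, 0 < x i ⬝ᵥ w := fun i => by
    have := (dotProductEquiv_apply_apply ℝ (Fin d) w (x i))
    rw [LinearEquiv.apply_symm_apply] at this
    rw [dotProduct_comm, ← this]
    exact (map_zero g ▸ hg0).trans (hgx _ (subset_convexHull ℝ _ ⟨i, rfl⟩))
  refine Submodule.eq_top_of_nonempty_interior' _ ⟨w, interior_mono Submodule.subset_span ?_⟩
  refine mem_interior.2 ⟨{y | ∀ i, 0 < x i ⬝ᵥ y}, ?_, ?_, hw⟩
  · rintro y hy _ ⟨i, rfl⟩
    exact (hy i).le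
  · simp only [Set.ofPred_forall]
    exact isOpen_iInter_of_finite fun i =>
      isOpen_lt continuous_const (continuous_const.dotProduct continuous_id)

theorem eucDual_coe_hull (s : Set (Fin d → ℝ)) :
    eucDual (hull ℝ s : Set (Fin d → ℝ)) = dual (dotProductBilin ℝ ℝ) s :=
  congrArg SetLike.coe (dual_hull (p := dotProductBilin ℝ ℝ) s)

theorem eucDual_hull_range_eq_and_span_eq_top {ι : Type*} [Finite ι] {x : ι → (Fin d → ℝ)}
    {m : ℕ} {y : Fin m → (Fin d → ℝ)}
    (hC : (hull ℝ (Set.range x) : ConvexCone ℝ (Fin d → ℝ)).Salient)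
    (hx : Submodule.span ℝ (Set.range x) = ⊤) (hx0 : ∀ i, x i ≠ 0)
    (hy : GensDistinctExtremeRays (eucDual (hull ℝ (Set.range x) : Set (Fin d → ℝ))) y) :
    eucDual (hull ℝ (Set.range x) : Set (Fin d → ℝ)) = hull ℝ (Set.range y) ∧
      Submodule.span ℝ (Set.range y) = ⊤ := by
  rw [eucDual_coe_hull] at hy ⊢
  have hDy := hull_range_eq_of_forall_isExtremeRayGen (fg_dual_of_finite _ (Set.finite_range x))
    (salient_dual_of_span_eq_top hx) (fun j => (hy.1 j).2.1) hy.2.2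
  refine ⟨by rw [hDy], ?_⟩
  rw [← span_coe_hull, hDy]
  exact span_dual_eq_top_of_salient hC hx0

end Dual

section Matrices

variable {K : Type*} [Field K] {k l m : Type*} [Fintype k] [DecidableEq k] [Fintype l]

theorem Matrix.exists_mul_eq_one_of_span_range_col [DecidableEq l] {Y : Matrix k l K}
    (h : Submodule.span K (Set.range Y.col) = ⊤) : ∃ W : Matrix l k K, Y * W = 1 := by
  obtain ⟨g, hg⟩ := LinearMap.exists_rightInverse_of_surjective (Matrix.toLin' Y)
    (by rw [Matrix.toLin'_apply', Matrix.range_mulVecLin, h])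
  refine ⟨LinearMap.toMatrix' g, ?_⟩
  have := congrArg LinearMap.toMatrix' hg
  rwa [LinearMap.toMatrix'_comp, LinearMap.toMatrix'_toLin', LinearMap.toMatrix'_id] at this

theorem Matrix.exists_mul_eq_one_of_mul_eq_mul [Fintype m] {X U : Matrix m k K} {Y V : Matrix k l K}
    {L : Matrix k m K} {W : Matrix l k K} (h : X * Y = U * V) (hL : L * X = 1) (hW : Y * W = 1) :
    ∃ S T : Matrix k k K, S * T = 1 ∧ U = X * T ∧ V = S * Y := by
  have hTS : (L * U) * (V * W) = 1 := by
    rw [Matrix.mul_assoc, ← Matrix.mul_assoc U, ← h, Matrix.mul_assoc, ← Matrix.mul_assoc L, hL,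
      Matrix.one_mul, hW]
  have hST : (V * W) * (L * U) = 1 := mul_eq_one_comm.1 hTS
  refine ⟨V * W, L * U, hST, ?_, ?_⟩
  · calc U = U * ((V * W) * (L * U)) := by rw [hST, Matrix.mul_one]
      _ = X * (Y * W) * (L * U) := by simp only [← Matrix.mul_assoc, h]
      _ = X * (L * U) := by rw [hW, Matrix.mul_one]
  · calc V = (V * W) * (L * U) * V := by rw [hST, Matrix.one_mul]
      _ = (V * W) * (L * X * Y) := by simp only [Matrix.mul_assoc, h]
      _ = (V * W) * Y := by rw [hL, Matrix.one_mul]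

theorem Matrix.exists_mul_eq_one_of_of_mul_transpose_eq [DecidableEq l] [Fintype m] [DecidableEq m]
    {x : m → k → K} {y : l → k → K} {U : Matrix m k K} {V : Matrix k l K}
    (hx : Submodule.span K (Set.range x) = ⊤) (hy : Submodule.span K (Set.range y) = ⊤)
    (h : of x * (of y)ᵀ = U * V) :
    ∃ S T : Matrix k k K, S * T = 1 ∧
      (fun i => U i) = Tᵀ.mulVecLin ∘ x ∧ (fun j i => V i j) = S.mulVecLin ∘ y := by
  obtain ⟨L, hL⟩ := exists_mul_eq_one_of_span_range_col (Y := (of x)ᵀ) hx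
  obtain ⟨W, hW⟩ := exists_mul_eq_one_of_span_range_col (Y := (of y)ᵀ) hy
  obtain ⟨S, T, hST, rfl, rfl⟩ := exists_mul_eq_one_of_mul_eq_mul h
    (by rw [← transpose_transpose (of x), ← transpose_mul, hL, transpose_one]) hW
  exact ⟨S, T, hST, funext fun i => (mulVec_transpose T (x i)).symm, rfl⟩

end Matrices

theorem eucDual_image_transpose_mulVec {d : ℕ} {S T : Matrix (Fin d) (Fin d) ℝ} (hST : S * T = 1)
    (K : Set (Fin d → ℝ)) : eucDual ((Tᵀ *ᵥ ·) '' K) = (S *ᵥ ·) '' eucDual K := by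
  have hTS : T * S = 1 := mul_eq_one_comm.1 hST
  ext y
  constructor
  · intro hy
    refine ⟨T *ᵥ y, fun z hz => ?_, by simp only [mulVec_mulVec, hST, one_mulVec]⟩
    simpa only [mulVec_transpose, ← dotProduct_mulVec] using hy _ ⟨z, hz, rfl⟩
  · rintro ⟨z, hz, rfl⟩ _ ⟨w, hw, rfl⟩
    dsimp only
    rw [mulVec_transpose, ← dotProduct_mulVec, mulVec_mulVec, hTS, one_mulVec]
    exact hz w hw

/-- If `M = U V` is a factorization of a slack matrix of a pointed
full-dimensional polyhedral cone `K ⊆ ℝ^d` with `U ∈ ℝ^{n×d}`, `V ∈ ℝ^{d×m}`, then `K`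
is linearly isomorphic to the cone generated by the rows of `U`, and the Euclidean dual
of that cone equals the cone generated by the columns of `V`. -/
theorem slack_factorization_identifies_cone_and_dual
    {d n m : ℕ} (K : Set (Fin d → ℝ))
    (hpoly : IsPolyhedralCone K) (hpointed : K ∩ (-K) = {0})
    (hfull : Submodule.span ℝ K = ⊤)
    (M : Matrix (Fin n) (Fin m) ℝ) (hslack : IsSlackMatrix M K)
    (U : Matrix (Fin n) (Fin d) ℝ) (V : Matrix (Fin d) (Fin m) ℝ)
    (hfact : M = U * V) :
    (∃ S : Matrix (Fin d) (Fin d) ℝ, IsUnit S.det ∧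
        (fun v => S.mulVec v) '' K = coneGenBy (fun i => U i)) ∧
      eucDual (coneGenBy (fun i => U i)) = coneGenBy (fun j => fun i => V i j) := by
  obtain ⟨N, v, hKv⟩ := hpoly
  obtain ⟨x, y, hx, hy, hMxy⟩ := hslack
  obtain rfl : K = hull ℝ (Set.range v) := hKv.trans (coneGenBy_eq_hull v)
  have hCs := (salient_iff_inter_neg_eq_singleton _).2 hpointed
  have hCx : hull ℝ (Set.range x) = hull ℝ (Set.range v) := hull_range_eq_of_forall_isExtremeRayGen
    (Submodule.fg_span (Set.finite_range v)) hCs (fun i => (hx.1 i).2.1) hx.2.2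
  have hspanx : Submodule.span ℝ (Set.range x) = ⊤ := by rw [← span_coe_hull, hCx, hfull]
  rw [← hCx] at hCs hy ⊢
  obtain ⟨hdual, hspany⟩ :=
    eucDual_hull_range_eq_and_span_eq_top hCs hspanx (fun i => (hx.1 i).1) hy
  obtain ⟨S, T, hST, hU, hV⟩ := Matrix.exists_mul_eq_one_of_of_mul_transpose_eq hspanx hspany
    (by rw [← hfact]; ext i j; simp [hMxy, mul_apply, dotProduct])
  have hUx : coneGenBy (fun i => U i) = (Tᵀ *ᵥ ·) '' hull ℝ (Set.range x) := by
    rw [hU, coneGenBy_eq_hull, ← image_hull_range]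
    rfl
  refine ⟨⟨Tᵀ, by rw [det_transpose]; exact isUnit_det_of_left_inverse hST, hUx.symm⟩, ?_⟩
  rw [hUx, eucDual_image_transpose_mulVec hST, hdual, hV, coneGenBy_eq_hull, ← image_hull_range]
  rfl
end

section
/- Let K ⊆ R^d be a self-dual cone with respect to an inner product ⟨·,·⟩ and H ⊆ R^d a subspace. Then the following are equivalent: (i) span(K ∩ H) = H and K ∩ H is self-dual on its span (i.e., K ∩ H = (K ∩ H)* ∩ H); (ii) π_H(K) = K ∩ H, where π_H is the orthogonal projection onto H with respect to ⟨·,·⟩. -/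
/-!
For `y ∈ H` we have `⟪π_H x, y⟫ = ⟪x, y⟫`, so inside `H` the dual of `π_H(K)` is the dual of `K`,
and `π_H` maps `K*` into `(K ∩ H)*`. With `K = K*` this turns the self-duality of `K ∩ H` into
`π_H(K) ⊆ K ∩ H` and back. The span condition is automatic: a self-dual cone spans the whole
space, and `π_H` maps the whole space onto `H`.
-/

open RealInnerProductSpace ProperCone Submodule

section

variable {V : Type*} [NormedAddCommGroup V] [InnerProductSpace ℝ V]

theorem inner_starProjection_eq_of_mem_right (H : Submodule ℝ V) [H.HasOrthogonalProjection]
    (x : V) {y : V} (hy : y ∈ H) : ⟪H.starProjection x, y⟫ = ⟪x, y⟫ :=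
  H.inner_orthogonalProjectionOnto_eq_of_mem_right ⟨y, hy⟩ x

variable [CompleteSpace V] {H : Submodule ℝ V} [H.HasOrthogonalProjection] {s K : Set V}

theorem starProjection_mem_innerDual (hs : s ⊆ H) {y : V} (hy : y ∈ innerDual s) :
    H.starProjection y ∈ innerDual s := by
  refine mem_innerDual.mpr fun x hx => ?_
  rw [real_inner_comm, inner_starProjection_eq_of_mem_right H y (hs hx), real_inner_comm]
  exact hy hx

theorem mem_innerDual_image_starProjection_iff {y : V} (hy : y ∈ H) :
    y ∈ innerDual (H.starProjection '' s) ↔ y ∈ innerDual s := by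
  simp only [mem_innerDual, Set.forall_mem_image, inner_starProjection_eq_of_mem_right H _ hy]

theorem span_eq_top_of_innerDual_subset [FiniteDimensional ℝ V]
    (hK : (innerDual K : Set V) ⊆ K) : span ℝ K = ⊤ := by
  refine (span ℝ K).orthogonal_eq_bot_iff.mp (eq_bot_iff.mpr fun v hv => ?_)
  have hvK : v ∈ K :=
    hK (mem_innerDual.mpr fun x hx => (inner_right_of_mem_orthogonal (subset_span hx) hv).ge)
  exact (mem_bot ℝ).mpr (inner_self_eq_zero.mp (inner_left_of_mem_orthogonal (subset_span hvK) hv))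

theorem image_starProjection_eq_inter (hK : K ⊆ innerDual K)
    (hKH : (innerDual (K ∩ H) : Set V) ∩ H ⊆ K ∩ H) : H.starProjection '' K = K ∩ H := by
  refine subset_antisymm ?_ fun x hx => ⟨x, hx.1, H.starProjection_eq_self_iff.mpr hx.2⟩
  rintro _ ⟨k, hk, rfl⟩
  refine hKH ⟨starProjection_mem_innerDual Set.inter_subset_right ?_, H.starProjection_apply_mem k⟩
  exact innerDual_le_innerDual Set.inter_subset_left (hK hk)

theorem innerDual_inter_eq_of_image_starProjection (hK : (innerDual K : Set V) = K)
    (hπ : H.starProjection '' K = K ∩ H) : (innerDual (K ∩ H) : Set V) ∩ H = K ∩ H := by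
  refine subset_antisymm ?_ ?_
  · rintro y ⟨hy, hyH⟩
    rw [← hπ, SetLike.mem_coe, mem_innerDual_image_starProjection_iff hyH] at hy
    exact ⟨hK.le hy, hyH⟩
  · rintro y ⟨hyK, hyH⟩
    exact ⟨innerDual_le_innerDual Set.inter_subset_left (show y ∈ innerDual K from hK.ge hyK), hyH⟩

theorem span_inter_eq_of_image_starProjection [FiniteDimensional ℝ V]
    (hK : (innerDual K : Set V) ⊆ K) (hπ : H.starProjection '' K = K ∩ H) :
    span ℝ (K ∩ H) = H := by
  rw [← hπ, ← ContinuousLinearMap.coe_coe, ← map_span, span_eq_top_of_innerDual_subset hK,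
    Submodule.map_top]
  exact H.range_starProjection

end

theorem selfDual_slice_iff_projection_general
    {V : Type*} [NormedAddCommGroup V] [InnerProductSpace ℝ V] [FiniteDimensional ℝ V]
    (K : Set V)
    (hsd : K = {y : V | ∀ x ∈ K, 0 ≤ ⟪x, y⟫})
    (H : Submodule ℝ V) :
    (Submodule.span ℝ (K ∩ H) = H ∧
        K ∩ H = {y : V | ∀ x ∈ K ∩ H, 0 ≤ ⟪x, y⟫} ∩ H) ↔
      (fun x => (H.orthogonalProjectionOnto x : V)) '' K = K ∩ H := by
  have hK : (innerDual K : Set V) = K := hsd.symm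
  change (span ℝ (K ∩ H) = H ∧ K ∩ H = (innerDual (K ∩ H) : Set V) ∩ H) ↔
    H.starProjection '' K = K ∩ H
  refine ⟨fun h => image_starProjection_eq_inter hK.ge h.2.ge, fun hπ => ⟨?_, ?_⟩⟩
  · exact span_inter_eq_of_image_starProjection hK.le hπ
  · exact (innerDual_inter_eq_of_image_starProjection hK hπ).symm

/-- Let `K` be a self-dual closed convex cone in a finite-dimensional real
inner product space and `H` a subspace. Then: (`span(K ∩ H) = H` and `K ∩ H` is
self-dual on its span, i.e. `K ∩ H = (K ∩ H)* ∩ H`) if and only if `π_H(K) = K ∩ H`,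
where `π_H` is the orthogonal projection onto `H`. -/
theorem selfDual_slice_iff_projection
    {V : Type*} [NormedAddCommGroup V] [InnerProductSpace ℝ V] [FiniteDimensional ℝ V]
    (K : Set V) (hKclosed : IsClosed K) (hKconv : Convex ℝ K)
    (hKcone : ∀ (c : ℝ), 0 ≤ c → ∀ x ∈ K, c • x ∈ K)
    (hsd : K = {y : V | ∀ x ∈ K, 0 ≤ ⟪x, y⟫})
    (H : Submodule ℝ V) :
    (Submodule.span ℝ (K ∩ H) = H ∧
        K ∩ H = {y : V | ∀ x ∈ K ∩ H, 0 ≤ ⟪x, y⟫} ∩ H) ↔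
      (fun x => (H.orthogonalProjectionOnto x : V)) '' K = K ∩ H :=
  selfDual_slice_iff_projection_general K hsd H
end
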